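/- Let n ≥ 1 and r ≥ 1 be integers and let m₁, …, m_r be positive integers with c₁ = ∑_{u=1}^r m_u < 2r. Let i be an integer with 0 ≤ i ≤ c₁ − r and i ≤ n. Then in the quotient ring R = ℤ[h, ξ] / (h^{n+1}, ∏_{u=1}^r (ξ − m_u·h)), the following identity holds: ∏_{u=1}^r (ξ − m_u·h)^{m_u−1} · h^{n−i} · ξ^{2r−c₁−1+i} = T_i · h^n · ξ^{r−1}, where T_i = ∑_{j=0}^i h_{i−j}(m₁,…,m_r) · ( ∑_{(j₁,…,j_r) ∈ ℕ^r, j₁+⋯+j_r = j} ∏_{u=1}^r C(m_u−1, j_u)·(−m_u)^{j_u} ). -/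

import Mathlib

open MvPolynomial

/-!
Write `h = X 0`, `ξ = X 1` and `h_k = completeHom r m k`. The relation `∏_u (ξ - m_u h) = 0`
alone already forces `ξ^{r-1+k} ≡ h_k h^k ξ^{r-1}` modulo `h^{k+1}`: multiplying the relation by
`ξ^{k-1}` gives a linear recursion for `ξ^{r-1+k}` modulo `h^{k+1}` whose coefficients are those of
`∏_u (1 - m_u t)`, the inverse of the generating series `∑_k h_k t^k`.
Expanding `∏_u (ξ - m_u h)^{m_u - 1} = ∑_j E_j h^j ξ^{c₁ - r - j}` and reducing each term in the
same way gives `T_i h^i ξ^{r-1}` modulo `h^{i+1}`, and multiplying by `h^{n-i}` turns this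
congruence into the identity, since `h^{n+1} = 0`.
-/

/-- The complete homogeneous symmetric polynomial of degree `i` evaluated at
`(m 0, …, m (r-1))`:  `h_i(m) = ∑_{j₁+⋯+j_r = i} ∏_u m_u^{j_u}`. -/
def completeHom (r : ℕ) (m : Fin r → ℕ) (i : ℕ) : ℤ :=
  ∑ j ∈ Finset.Nat.antidiagonalTuple r i, ∏ u, (m u : ℤ) ^ j u

/-- `E_j = ∑_{j₁+⋯+j_r = j} ∏_{u=1}^r C(m_u−1, j_u)·(−m_u)^{j_u}`. -/
def Ecoeff (r : ℕ) (m : Fin r → ℕ) (j : ℕ) : ℤ :=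
  ∑ jv ∈ Finset.Nat.antidiagonalTuple r j,
    ∏ u, ((m u - 1).choose (jv u) : ℤ) * (-(m u : ℤ)) ^ jv u

/-- `T_i = ∑_{j=0}^i h_{i−j}(m₁,…,m_r)·E_j`. -/
def Tcoeff (r : ℕ) (m : Fin r → ℕ) (i : ℕ) : ℤ :=
  ∑ j ∈ Finset.range (i + 1), completeHom r m (i - j) * Ecoeff r m j

namespace PowerSeries

variable {R : Type*}

theorem coeff_prod_univ_fin [CommSemiring R] {r : ℕ} (f : Fin r → R⟦X⟧) (d : ℕ) :
    coeff d (∏ u, f u) = ∑ jv ∈ Finset.Nat.antidiagonalTuple r d, ∏ u, coeff (jv u) (f u) := by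
  rw [coeff_prod, ← Finset.piAntidiag_univ_fin_eq_antidiagonalTuple, Finset.finsuppAntidiag,
    Finset.sum_map, ← Finset.sum_attach (Finset.univ.piAntidiag d)]
  rfl

theorem mk_pow_mul_one_sub_C_mul_X [CommRing R] (a : R) :
    mk (a ^ ·) * (1 - C a * X) = 1 := by
  simpa [rescale_mk] using congrArg (rescale a) (mk_one_mul_one_sub_eq_one R)

theorem coeff_one_sub_C_mul_X_pow [CommRing R] (a : R) (N k : ℕ) :
    coeff k ((1 - C a * X) ^ N) = N.choose k * (-a) ^ k := by
  have h : (1 - C a * X) ^ N = rescale (-a) (((1 + Polynomial.X) ^ N : Polynomial R) : R⟦X⟧) := by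
    simp [sub_eq_add_neg]
  rw [h, coeff_rescale, Polynomial.coeff_coe, Polynomial.coeff_one_add_X_pow, mul_comm]

end PowerSeries

namespace Polynomial

variable {R : Type*} [CommRing R]

theorem natDegree_one_sub_C_mul_X_le (a : R) : (1 - C a * X).natDegree ≤ 1 := by
  compute_degree!

theorem homogenize_pow {p : R[X]} {d : ℕ} (hp : p.natDegree ≤ d) (N : ℕ) :
    (p ^ N).homogenize (N * d) = p.homogenize d ^ N := by
  induction N with
  | zero => simp
  | succ N ih =>
    rw [pow_succ, Nat.succ_mul, homogenize_mul _ _ (natDegree_pow_le_of_le N hp) hp, ih, pow_succ]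

theorem homogenize_one_sub_C_mul_X_pow (a : R) (N : ℕ) :
    ((1 - C a * X) ^ N).homogenize N
      = (MvPolynomial.X 1 - MvPolynomial.C a * MvPolynomial.X 0) ^ N := by
  simpa using homogenize_pow (natDegree_one_sub_C_mul_X_le a) N

theorem aeval_homogenize {A : Type*} [CommRing A] [Algebra R A] (p : R[X]) (d : ℕ) (x y : A) :
    MvPolynomial.aeval ![x, y] (p.homogenize d)
      = ∑ j ∈ Finset.range (d + 1), algebraMap R A (p.coeff j) * x ^ j * y ^ (d - j) := by
  simp [homogenize, Finset.Nat.sum_antidiagonal_eq_sum_range_succ_mk, MvPolynomial.aeval_monomial,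
    Finsupp.prod_fintype, Fin.prod_univ_two, mul_assoc]

end Polynomial

theorem completeHom_zero (r : ℕ) (m : Fin r → ℕ) : completeHom r m 0 = 1 := by
  simp [completeHom, Finset.Nat.antidiagonalTuple_zero_right]

theorem mk_completeHom {r : ℕ} (m : Fin r → ℕ) :
    PowerSeries.mk (completeHom r m) = ∏ u, PowerSeries.mk ((m u : ℤ) ^ ·) := by
  ext d
  simp [PowerSeries.coeff_prod_univ_fin, completeHom]

/-- The dehomogenization `ξ = 1`, `h = t` of `∏_u (ξ - m_u h)^{N_u}`. -/
noncomputable def linearFactorsSeries {r : ℕ} (m N : Fin r → ℕ) : PowerSeries ℤ :=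
  ∏ u, (1 - PowerSeries.C (m u : ℤ) * PowerSeries.X) ^ N u

section LinearFactorsSeries

variable {r : ℕ} (m : Fin r → ℕ)

theorem coeff_zero_linearFactorsSeries (N : Fin r → ℕ) :
    PowerSeries.coeff 0 (linearFactorsSeries m N) = 1 := by
  simp [linearFactorsSeries]

theorem linearFactorsSeries_one_mul_mk_completeHom :
    linearFactorsSeries m 1 * PowerSeries.mk (completeHom r m) = 1 := by
  rw [linearFactorsSeries, mk_completeHom, ← Finset.prod_mul_distrib]
  exact Finset.prod_eq_one fun u _ => by
    rw [Pi.one_apply, pow_one, mul_comm, PowerSeries.mk_pow_mul_one_sub_C_mul_X]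

theorem sum_completeHom_mul_coeff_succ (k : ℕ) :
    ∑ j ∈ Finset.range (k + 1),
        completeHom r m (k - j) * PowerSeries.coeff (j + 1) (linearFactorsSeries m 1)
      = -completeHom r m (k + 1) := by
  have h := congrArg (PowerSeries.coeff (k + 1)) (linearFactorsSeries_one_mul_mk_completeHom m)
  rw [PowerSeries.coeff_mul, Finset.Nat.sum_antidiagonal_eq_sum_range_succ_mk,
    Finset.sum_range_succ'] at h
  simp only [coeff_zero_linearFactorsSeries, PowerSeries.coeff_mk, PowerSeries.coeff_one,
    one_mul, if_neg k.succ_ne_zero] at h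
  rw [eq_neg_iff_add_eq_zero, ← h]
  congr 1
  refine Finset.sum_congr rfl fun j _ => ?_
  rw [mul_comm, Nat.succ_sub_succ]

theorem Ecoeff_eq_coeff (j : ℕ) :
    Ecoeff r m j = PowerSeries.coeff j (linearFactorsSeries m (m · - 1)) := by
  simp only [linearFactorsSeries, PowerSeries.coeff_prod_univ_fin,
    PowerSeries.coeff_one_sub_C_mul_X_pow, Ecoeff]

end LinearFactorsSeries

section Congruences

variable {A : Type*} [CommRing A] {h : A}

theorem SModEq.pow_mul_of_span_pow {x y : A} {a : ℕ} (hxy : x ≡ y [SMOD Ideal.span {h ^ a}])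
    (b : ℕ) : h ^ b * x ≡ h ^ b * y [SMOD Ideal.span {h ^ (b + a)}] := by
  rw [SModEq.sub_mem, Ideal.mem_span_singleton] at hxy ⊢
  rw [← mul_sub, pow_add]
  exact mul_dvd_mul_left _ hxy

theorem sum_range_mul_pow_smodEq_of_le (a g : ℕ → A) {k M : ℕ} (hk : k ≤ M) :
    ∑ j ∈ Finset.range (M + 1), a j * h ^ j * g j
      ≡ ∑ j ∈ Finset.range (k + 1), a j * h ^ j * g j [SMOD Ideal.span {h ^ (k + 1)}] := by
  rw [← Finset.sum_range_add_sum_Ico _ (Nat.succ_le_succ hk), SModEq.sub_mem, add_sub_cancel_left,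
    Ideal.mem_span_singleton]
  refine Finset.dvd_sum fun j hj => ?_
  exact ((pow_dvd_pow h (Finset.mem_Ico.mp hj).1).mul_left _).mul_right _

end Congruences

section Reduction

variable {A : Type*} [CommRing A] (h ξ : A) {r : ℕ} (m : Fin r → ℕ)

theorem prod_sub_pow_mul_pow_eq_sum (N : Fin r → ℕ) {M : ℕ} (hM : ∑ u, N u ≤ M) :
    (∏ u, (ξ - m u * h) ^ N u) * ξ ^ (M - ∑ u, N u)
      = ∑ j ∈ Finset.range (M + 1),
          ((PowerSeries.coeff j (linearFactorsSeries m N) : ℤ) : A) * h ^ j * ξ ^ (M - j) := by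
  let p : Polynomial ℤ := ∏ u, (1 - Polynomial.C (m u : ℤ) * Polynomial.X) ^ N u
  have hp : (p : PowerSeries ℤ) = linearFactorsSeries m N := by
    simp only [p, ← Polynomial.coeToPowerSeries.ringHom_apply, map_prod, map_pow, map_sub, map_one,
      map_mul]
    simp only [Polynomial.coeToPowerSeries.ringHom_apply, Polynomial.coe_C, Polynomial.coe_X,
      linearFactorsSeries]
  have hdeg (u : Fin r) :
      ((1 - Polynomial.C (m u : ℤ) * Polynomial.X) ^ N u).natDegree ≤ N u := by
    simpa using
      Polynomial.natDegree_pow_le_of_le (N u) (Polynomial.natDegree_one_sub_C_mul_X_le (m u : ℤ))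
  have hhom : p.homogenize M
      = (∏ u, (X 1 - C (m u : ℤ) * X 0) ^ N u) * X 1 ^ (M - ∑ u, N u) := by
    rw [← Nat.add_sub_cancel' hM, ← mul_one p, Polynomial.homogenize_mul _ _
      ((Polynomial.natDegree_prod_le _ _).trans (Finset.sum_le_sum fun u _ => hdeg u)) (by simp),
      Polynomial.homogenize_one, Nat.add_sub_cancel_left,
      Polynomial.homogenize_finsetProd fun u _ => hdeg u]
    simp only [Polynomial.homogenize_one_sub_C_mul_X_pow]
  have := congrArg (MvPolynomial.aeval ![h, ξ]) hhom
  rw [Polynomial.aeval_homogenize] at this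
  simpa [← hp, Polynomial.coeff_coe] using this.symm

theorem sum_mul_pow_smodEq_of_forall_le (a : ℕ → ℤ) (k : ℕ)
    (hred : ∀ j ≤ k, ξ ^ (r - 1 + j)
      ≡ completeHom r m j * h ^ j * ξ ^ (r - 1) [SMOD Ideal.span {h ^ (j + 1)}]) :
    ∑ j ∈ Finset.range (k + 1), (a j : A) * h ^ j * ξ ^ (r - 1 + (k - j))
      ≡ ((∑ j ∈ Finset.range (k + 1), completeHom r m (k - j) * a j : ℤ) : A) * h ^ k * ξ ^ (r - 1)
        [SMOD Ideal.span {h ^ (k + 1)}] := by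
  push_cast
  rw [Finset.sum_mul, Finset.sum_mul]
  refine SModEq.sum fun j hj => ?_
  have hj : j ≤ k := Nat.lt_succ_iff.mp (Finset.mem_range.mp hj)
  have hterm :=
    (SModEq.refl (a j : A)).mul ((hred (k - j) (Nat.sub_le k j)).pow_mul_of_span_pow j)
  rw [← Nat.add_assoc, Nat.add_sub_cancel' hj] at hterm
  convert hterm using 1
  · ring
  · rw [← pow_mul_pow_sub h hj]
    ring

end Reduction

section Relation

variable {A : Type*} [CommRing A] {h ξ : A} {r : ℕ} {m : Fin r → ℕ}

theorem pow_smodEq_completeHom (hr : 1 ≤ r) (hP : ∏ u, (ξ - m u * h) = 0) (k : ℕ) :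
    ξ ^ (r - 1 + k) ≡ completeHom r m k * h ^ k * ξ ^ (r - 1) [SMOD Ideal.span {h ^ (k + 1)}] := by
  induction k using Nat.strong_induction_on with
  | _ k ih =>
  rcases k with _ | k
  · simp [completeHom_zero, SModEq.refl]
  set c : ℕ → ℤ := fun j => PowerSeries.coeff j (linearFactorsSeries m 1)
  set S := ∑ j ∈ Finset.range (k + 1), (c (j + 1) : A) * h ^ j * ξ ^ (r - 1 + (k - j))
  have hrel : 0 ≡ h * S + ξ ^ (r - 1 + (k + 1)) [SMOD Ideal.span {h ^ (k + 1 + 1)}] := by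
    have hexp := prod_sub_pow_mul_pow_eq_sum h ξ m 1 (M := r + k) (by simp)
    simp only [Pi.one_apply, pow_one, hP, zero_mul] at hexp
    have hsplit : ∑ j ∈ Finset.range (k + 1 + 1), (c j : A) * h ^ j * ξ ^ (r + k - j)
        = h * S + ξ ^ (r - 1 + (k + 1)) := by
      have hc0 : c 0 = 1 := coeff_zero_linearFactorsSeries m 1
      rw [Finset.sum_range_succ', Finset.mul_sum, hc0]
      congr 1
      · refine Finset.sum_congr rfl fun j hj => ?_
        rw [show r + k - (j + 1) = r - 1 + (k - j) by
          have := Finset.mem_range.mp hj; omega]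
        ring
      · rw [show r + k - 0 = r - 1 + (k + 1) by omega]
        ring
    rw [hexp, ← hsplit]
    exact sum_range_mul_pow_smodEq_of_le _ _ (by omega)
  have hS : h * S ≡ -completeHom r m (k + 1) * h ^ (k + 1) * ξ ^ (r - 1)
      [SMOD Ideal.span {h ^ (k + 1 + 1)}] := by
    have := (sum_mul_pow_smodEq_of_forall_le h ξ m (fun j => c (j + 1)) k
      fun j hj => ih j (by omega)).pow_mul_of_span_pow 1
    rw [sum_completeHom_mul_coeff_succ, Nat.add_comm 1] at this
    convert this using 1
    · simp [S]
    · push_cast; ring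
  calc ξ ^ (r - 1 + (k + 1)) = (h * S + ξ ^ (r - 1 + (k + 1))) - h * S := by ring
    _ ≡ 0 - -completeHom r m (k + 1) * h ^ (k + 1) * ξ ^ (r - 1)
        [SMOD Ideal.span {h ^ (k + 1 + 1)}] := hrel.symm.sub hS
    _ = completeHom r m (k + 1) * h ^ (k + 1) * ξ ^ (r - 1) := by ring

theorem prod_sub_pow_pred_mul_smodEq (hr : 1 ≤ r) (hP : ∏ u, (ξ - m u * h) = 0) (i : ℕ)
    (hi : ∑ u, (m u - 1) ≤ r - 1 + i) :
    (∏ u, (ξ - m u * h) ^ (m u - 1)) * ξ ^ (r - 1 + i - ∑ u, (m u - 1))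
      ≡ Tcoeff r m i * h ^ i * ξ ^ (r - 1) [SMOD Ideal.span {h ^ (i + 1)}] := by
  set E : ℕ → ℤ := fun j => PowerSeries.coeff j (linearFactorsSeries m (m · - 1))
  calc _ = ∑ j ∈ Finset.range (r - 1 + i + 1), (E j : A) * h ^ j * ξ ^ (r - 1 + i - j) :=
        prod_sub_pow_mul_pow_eq_sum h ξ m _ hi
    _ ≡ ∑ j ∈ Finset.range (i + 1), (E j : A) * h ^ j * ξ ^ (r - 1 + i - j)
        [SMOD Ideal.span {h ^ (i + 1)}] := sum_range_mul_pow_smodEq_of_le _ _ (by omega)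
    _ = ∑ j ∈ Finset.range (i + 1), (E j : A) * h ^ j * ξ ^ (r - 1 + (i - j)) :=
        Finset.sum_congr rfl fun j hj => by
          rw [Nat.add_sub_assoc (Nat.lt_succ_iff.mp (Finset.mem_range.mp hj))]
    _ ≡ ((∑ j ∈ Finset.range (i + 1), completeHom r m (i - j) * E j : ℤ) : A) * h ^ i
          * ξ ^ (r - 1) [SMOD Ideal.span {h ^ (i + 1)}] :=
        sum_mul_pow_smodEq_of_forall_le h ξ m E i fun j _ => pow_smodEq_completeHom hr hP j
    _ = Tcoeff r m i * h ^ i * ξ ^ (r - 1) := by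
        simp only [Tcoeff, Ecoeff_eq_coeff, E]

end Relation

theorem classical_intersection_eval_general
    (n r : ℕ) (hr : 1 ≤ r) (m : Fin r → ℕ) (hm : ∀ u, 0 < m u)
    (c₁ : ℕ) (hc₁ : c₁ = ∑ u, m u) (hlt : c₁ < 2 * r)
    (i : ℕ) (hin : i ≤ n) :
    Ideal.Quotient.mk
        (Ideal.span {(X 0 : MvPolynomial (Fin 2) ℤ) ^ (n + 1),
          ∏ u, (X 1 - MvPolynomial.C (m u : ℤ) * X 0)})
        ((∏ u, (X 1 - MvPolynomial.C (m u : ℤ) * X 0) ^ (m u - 1)) *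
          X 0 ^ (n - i) * X 1 ^ (2 * r - c₁ - 1 + i))
      = Ideal.Quotient.mk
          (Ideal.span {(X 0 : MvPolynomial (Fin 2) ℤ) ^ (n + 1),
            ∏ u, (X 1 - MvPolynomial.C (m u : ℤ) * X 0)})
          (MvPolynomial.C (Tcoeff r m i) * X 0 ^ n * X 1 ^ (r - 1)) := by
  set I := Ideal.span {(X 0 : MvPolynomial (Fin 2) ℤ) ^ (n + 1),
    ∏ u, (X 1 - MvPolynomial.C (m u : ℤ) * X 0)}
  have hh : Ideal.Quotient.mk I (X 0) ^ (n + 1) = 0 := by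
    rw [← map_pow, Ideal.Quotient.eq_zero_iff_mem]
    exact Ideal.subset_span (by simp)
  have hP : ∏ u, (Ideal.Quotient.mk I (X 1) - m u * Ideal.Quotient.mk I (X 0)) = 0 := by
    have : Ideal.Quotient.mk I (∏ u, (X 1 - MvPolynomial.C (m u : ℤ) * X 0)) = 0 :=
      Ideal.Quotient.eq_zero_iff_mem.mpr (Ideal.subset_span (by simp))
    simpa using this
  have hdeg : ∑ u, (m u - 1) + r = c₁ := by
    have := Finset.sum_congr rfl fun u (_ : u ∈ Finset.univ) => Nat.sub_add_cancel (hm u)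
    simpa [Finset.sum_add_distrib, hc₁] using this
  have key := (prod_sub_pow_pred_mul_smodEq hr hP i (by omega)).pow_mul_of_span_pow (n - i)
  rw [show n - i + (i + 1) = n + 1 by omega, hh, Ideal.span_singleton_eq_bot.mpr rfl,
    SModEq.bot] at key
  rw [show 2 * r - c₁ - 1 + i = r - 1 + i - ∑ u, (m u - 1) by omega]
  simp only [map_mul, map_pow, map_prod, map_sub, map_natCast, eq_intCast, map_intCast]
  rw [← pow_mul_pow_sub _ hin]
  linear_combination key

/-- Equation (5.16)'s right-hand side, computed in the proof of Proposition 5.14: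
in the cohomology ring `R = ℤ[h, ξ]/(h^{n+1}, ∏_u (ξ − m_u h))` of
`ℙ(⊕_{u=1}^r O_{ℙⁿ}(m_u))` (with `h = X 0`, `ξ = X 1`), for `0 ≤ i ≤ c₁ − r`
and `i ≤ n`, one has
`∏_u (ξ − m_u h)^{m_u−1} · h^{n−i} · ξ^{2r−c₁−1+i} = T_i · h^n · ξ^{r−1}`. -/
theorem classical_intersection_eval
    (n r : ℕ) (hn : 1 ≤ n) (hr : 1 ≤ r) (m : Fin r → ℕ) (hm : ∀ u, 0 < m u)
    (c₁ : ℕ) (hc₁ : c₁ = ∑ u, m u) (hlt : c₁ < 2 * r)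
    (i : ℕ) (hi : i + r ≤ c₁) (hin : i ≤ n) :
    Ideal.Quotient.mk
        (Ideal.span {(X 0 : MvPolynomial (Fin 2) ℤ) ^ (n + 1),
          ∏ u, (X 1 - MvPolynomial.C (m u : ℤ) * X 0)})
        ((∏ u, (X 1 - MvPolynomial.C (m u : ℤ) * X 0) ^ (m u - 1)) *
          X 0 ^ (n - i) * X 1 ^ (2 * r - c₁ - 1 + i))
      = Ideal.Quotient.mk
          (Ideal.span {(X 0 : MvPolynomial (Fin 2) ℤ) ^ (n + 1),
            ∏ u, (X 1 - MvPolynomial.C (m u : ℤ) * X 0)})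
          (MvPolynomial.C (Tcoeff r m i) * X 0 ^ n * X 1 ^ (r - 1)) :=
  classical_intersection_eval_general n r hr m hm c₁ hc₁ hlt i hin
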